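/- Let E be a symmetric Banach function space on [0,1] and K ⊆ E a set of nonzero functions. Suppose there exists ε > 0 such that for every x ∈ K, mes{t : |x(t)| ≥ ε‖x‖_E} ≥ ε. Then for every measurable e ⊆ [0,1] with mes(e) ≥ 1 − ε/2 and every x ∈ K, one has ‖x·χ_e‖_E ≥ ε·φ_E(ε/2)·‖x‖_E, where φ_E is the fundamental function of E. -/
import Mathlib


open MeasureTheory Set

noncomputable section

/-- Lebesgue measure on `[0,1]`. -/
def μ01 : Measure ℝ := volume.restrict (Icc 0 1)

/-- A symmetric (rearrangement-invariant) Banach function space on `[0,1]`, given by a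
membership predicate and a norm on measurable functions. -/
structure SymSpace where
  Mem : (ℝ → ℝ) → Prop
  N : (ℝ → ℝ) → ℝ
  mem_aesm : ∀ f, Mem f → AEStronglyMeasurable f μ01
  nonneg : ∀ f, 0 ≤ N f
  zero_mem : Mem 0
  add_mem : ∀ f g, Mem f → Mem g → Mem (f + g)
  smul_mem : ∀ (c : ℝ) f, Mem f → Mem (c • f)
  N_add : ∀ f g, Mem f → Mem g → N (f + g) ≤ N f + N g
  N_smul : ∀ (c : ℝ) f, Mem f → N (c • f) = |c| * N f
  N_eq_zero : ∀ f, Mem f → (N f = 0 ↔ f =ᵐ[μ01] 0)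
  /-- lattice property: a.e. domination implies membership and norm inequality -/
  lattice : ∀ f g, Mem f → AEStronglyMeasurable g μ01 →
    (∀ᵐ t ∂μ01, |g t| ≤ |f t|) → Mem g ∧ N g ≤ N f
  /-- symmetry: equimeasurable functions belong together and have equal norms -/
  symm : ∀ f g, Mem f → AEStronglyMeasurable g μ01 →
    (∀ s : ℝ, 0 < s → μ01 {t | s < |f t|} = μ01 {t | s < |g t|}) → Mem g ∧ N g = N f

/-- The fundamental function `φ_E(τ) = ‖χ_{[0,τ]}‖_E`. -/
def fund (E : SymSpace) (τ : ℝ) : ℝ := E.N ((Icc (0:ℝ) τ).indicator (fun _ => (1:ℝ)))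

/-- The Köthe-dual norm `‖f‖_{E′} = sup { ∫ |f·x| : x ∈ E, ‖x‖_E ≤ 1 }`. -/
def dualN (E : SymSpace) (f : ℝ → ℝ) : ℝ :=
  sSup {r : ℝ | ∃ x : ℝ → ℝ, E.Mem x ∧ E.N x ≤ 1 ∧ r = ∫ t, |f t * x t| ∂μ01}

/-- The nonincreasing rearrangement of `|f|`. -/
def rearr (f : ℝ → ℝ) (t : ℝ) : ℝ :=
  sInf {s : ℝ | 0 ≤ s ∧ (μ01 {a : ℝ | s < |f a|}).toReal < t}

/-- If every `x ∈ K` satisfies `mes{|x| ≥ ε‖x‖_E} ≥ ε`, then for every measurable `e` of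
measure `≥ 1 − ε/2` and every `x ∈ K`, `‖x·χ_e‖_E ≥ ε·φ_E(ε/2)·‖x‖_E`. -/
theorem norm_on_large_sets (E : SymSpace) (K : Set (ℝ → ℝ))
    (hK : ∀ x ∈ K, E.Mem x) (hK0 : ∀ x ∈ K, ¬ x =ᵐ[μ01] 0)
    (ε : ℝ) (hε : 0 < ε)
    (hbig : ∀ x ∈ K, ENNReal.ofReal ε ≤ μ01 {t : ℝ | ε * E.N x ≤ |x t|}) :
    ∀ e : Set ℝ, MeasurableSet e → ENNReal.ofReal (1 - ε / 2) ≤ μ01 e →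
      ∀ x ∈ K, ε * fund E (ε / 2) * E.N x ≤ E.N (e.indicator x) := by
  intro e he hme x hxK
  have hx : E.Mem x := hK x hxK
  have haesm := E.mem_aesm x hx
  have hNx : 0 < E.N x := by
    rcases (E.nonneg x).lt_or_eq with h | h
    · exact h
    · exact absurd ((E.N_eq_zero x hx).1 h.symm) (hK0 x hxK)
  set c := ε * E.N x with hc
  have hc0 : 0 < c := mul_pos hε hNx
  obtain ⟨x', hx'm, hxx'⟩ := haesm
  set A : Set ℝ := {t | c ≤ |x' t|} with hA
  have hAm : MeasurableSet A := measurableSet_le measurable_const hx'm.measurable.abs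
  have hAeq : μ01 {t | c ≤ |x t|} = μ01 A := by
    apply measure_congr
    rw [Filter.eventuallyEq_set]
    filter_upwards [hxx'] with t ht
    simp [hA, ht]
  have huniv : μ01 univ = 1 := by
    simp [μ01, Real.volume_Icc]
  have h1 : ENNReal.ofReal ε ≤ μ01 A := hAeq ▸ hbig x hxK
  have hε1 : ε ≤ 1 := by
    have h2 := h1.trans (measure_mono (subset_univ A))
    rw [huniv] at h2
    exact ENNReal.ofReal_le_one.mp h2
  set S : Set ℝ := A ∩ e with hSdef
  have hSm : MeasurableSet S := hAm.inter he
  have hS : ENNReal.ofReal (ε / 2) ≤ μ01 S := by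
    have hadd : μ01 (A ∪ e) + μ01 S = μ01 A + μ01 e := measure_union_add_inter A he
    have hun : μ01 (A ∪ e) ≤ 1 := huniv ▸ measure_mono (subset_univ _)
    have hsum : ENNReal.ofReal (ε / 2) + 1 ≤ μ01 S + 1 := by
      calc ENNReal.ofReal (ε / 2) + 1 = ENNReal.ofReal ε + ENNReal.ofReal (1 - ε / 2) := by
            rw [← ENNReal.ofReal_one, ← ENNReal.ofReal_add (by linarith) (by norm_num),
              ← ENNReal.ofReal_add (by linarith) (by linarith)]
            ring_nf
        _ ≤ μ01 A + μ01 e := add_le_add h1 hme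
        _ = μ01 (A ∪ e) + μ01 S := hadd.symm
        _ ≤ 1 + μ01 S := add_le_add hun le_rfl
        _ = μ01 S + 1 := add_comm _ _
    exact (ENNReal.add_le_add_iff_right ENNReal.one_ne_top).mp hsum
  have hSfin : μ01 S ≠ ⊤ := ((measure_mono (subset_univ S)).trans_lt
    (huniv ▸ ENNReal.one_lt_top)).ne
  set m : ℝ := (μ01 S).toReal with hm
  have hμS : μ01 S = ENNReal.ofReal m := (ENNReal.ofReal_toReal hSfin).symm
  have hm2 : ε / 2 ≤ m := by
    rw [hμS] at hS
    exact (ENNReal.ofReal_le_ofReal_iff ENNReal.toReal_nonneg).mp hS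
  have hm1 : m ≤ 1 := by
    have h2 : μ01 S ≤ 1 := huniv ▸ measure_mono (subset_univ S)
    rw [hμS] at h2
    exact ENNReal.ofReal_le_one.mp h2
  have hm0 : 0 ≤ m := ENNReal.toReal_nonneg
  have hμIcc : μ01 (Icc 0 m) = μ01 S := by
    rw [hμS, μ01, Measure.restrict_apply measurableSet_Icc,
      inter_eq_left.mpr (Icc_subset_Icc_right hm1), Real.volume_Icc, sub_zero]
  -- membership of e.indicator x
  have hind : E.Mem (e.indicator x) ∧ E.N (e.indicator x) ≤ E.N x := by
    refine E.lattice x _ hx ((E.mem_aesm x hx).indicator he) (Filter.Eventually.of_forall ?_)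
    intro t
    by_cases ht : t ∈ e <;> simp [ht, abs_nonneg]
  -- the function c • χ_S
  set χS : ℝ → ℝ := S.indicator (fun _ => (1:ℝ)) with hχS
  have hχSm : AEStronglyMeasurable χS μ01 :=
    (Measurable.indicator measurable_const hSm).aestronglyMeasurable
  have hg : E.Mem (c • χS) ∧ E.N (c • χS) ≤ E.N (e.indicator x) := by
    refine E.lattice (e.indicator x) _ hind.1 (hχSm.const_smul c) ?_
    filter_upwards [hxx'] with t ht
    by_cases hts : t ∈ S
    · have hte : t ∈ e := hts.2
      have htA : c ≤ |x' t| := hts.1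
      simp only [Pi.smul_apply, hχS, indicator_of_mem hts, smul_eq_mul, mul_one,
        indicator_of_mem hte]
      rw [abs_of_pos hc0, ht]
      exact htA
    · have : t ∉ S := hts
      simp [hχS, indicator_of_notMem this, abs_of_pos hc0, abs_nonneg]
  have hχSmem : E.Mem χS := by
    have h2 := E.smul_mem c⁻¹ _ hg.1
    have : c⁻¹ • c • χS = χS := by
      rw [smul_smul, inv_mul_cancel₀ hc0.ne', one_smul]
    rwa [this] at h2
  have hNg : E.N (c • χS) = c * E.N χS := by
    rw [E.N_smul c χS hχSmem, abs_of_pos hc0]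
  -- equimeasurability with χ_{[0,m]}
  set χm : ℝ → ℝ := (Icc (0:ℝ) m).indicator (fun _ => (1:ℝ)) with hχm
  have hsymm : E.Mem χm ∧ E.N χm = E.N χS := by
    refine E.symm χS χm hχSmem
      ((Measurable.indicator measurable_const measurableSet_Icc).aestronglyMeasurable) ?_
    intro s hs
    rcases lt_or_ge s 1 with hs1 | hs1
    · have e1 : {t | s < |χS t|} = S := by
        ext t
        by_cases ht : t ∈ S <;> simp [hχS, ht, hs1, hs.le, not_lt.mpr hs.le]
      have e2 : {t | s < |χm t|} = Icc (0:ℝ) m := by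
        ext t
        by_cases ht : t ∈ Icc (0:ℝ) m <;> simp [hχm, ht, hs1, hs.le, not_lt.mpr hs.le]
      rw [e1, e2, hμIcc]
    · have e1 : {t | s < |χS t|} = ∅ := by
        ext t
        by_cases ht : t ∈ S <;> simp [hχS, ht, hs.le, not_lt.mpr hs1]
      have e2 : {t | s < |χm t|} = ∅ := by
        ext t
        by_cases ht : t ∈ Icc (0:ℝ) m <;> simp [hχm, ht, hs.le, not_lt.mpr hs1]
      rw [e1, e2]
  -- fundamental function bound
  have hfund : fund E (ε / 2) ≤ E.N χm := by
    have := E.lattice χm ((Icc (0:ℝ) (ε/2)).indicator (fun _ => (1:ℝ))) hsymm.1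
      ((Measurable.indicator measurable_const measurableSet_Icc).aestronglyMeasurable)
      (Filter.Eventually.of_forall ?_)
    · exact this.2
    · intro t
      by_cases ht : t ∈ Icc (0:ℝ) (ε/2)
      · have ht2 : t ∈ Icc (0:ℝ) m := Icc_subset_Icc_right hm2 ht
        simp [hχm, ht, ht2]
      · simp [hχm, ht, indicator_apply, apply_ite]
  -- combine
  have key : c * fund E (ε / 2) ≤ E.N (e.indicator x) := by
    calc c * fund E (ε / 2) ≤ c * E.N χm := by
          exact mul_le_mul_of_nonneg_left hfund hc0.le
      _ = c * E.N χS := by rw [hsymm.2]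
      _ = E.N (c • χS) := hNg.symm
      _ ≤ E.N (e.indicator x) := hg.2
  calc ε * fund E (ε / 2) * E.N x = c * fund E (ε / 2) := by rw [hc]; ring
    _ ≤ E.N (e.indicator x) := key
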